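/- arXiv:1509.02874 — 9 statements merged into one kernel-verified Lean document; each statement's English description precedes it below -/
import Mathlib

section
/- If $X$ is a dense subspace of a topological group $G$, then $w(X) = w(G)$, where $w$ denotes topological weight. -/
open Cardinal TopologicalSpace

/-- The weight of a topological space: the minimal cardinality of a base
(taken to be at least `ℵ₀`). -/
noncomputable def weight (X : Type u) [TopologicalSpace X] : Cardinal.{u} :=
  max ℵ₀ (⨅ B : {B : Set (Set X) // IsTopologicalBasis B}, #B.1)

/-!
In a topological group a π-base `S` already yields a base: the sets `P⁻¹ * P` with `P ∈ S` form
a neighbourhood base at `1`, a point chosen in each `P ∈ S` gives a dense set `D`, and the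
translates `d • (P⁻¹ * P)` with `d ∈ D` form a base of cardinality at most `#S * #S`. A dense
subspace `X` of a regular space `G` transfers a base `B` of `X` to the π-base
`{interior (closure U) | U ∈ B}` of `G`, so `w(G) ≤ w(X)`; the converse holds for any subspace.
-/

open Set Filter Topology Pointwise

def IsPiBase {Y : Type*} [TopologicalSpace Y] (S : Set (Set Y)) : Prop :=
  (∀ P ∈ S, IsOpen P ∧ P.Nonempty) ∧ ∀ W, IsOpen W → W.Nonempty → ∃ P ∈ S, P ⊆ W

section Weight

variable {X : Type u} [TopologicalSpace X]

instance : Nonempty {B : Set (Set X) // IsTopologicalBasis B} :=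
  ⟨⟨_, isTopologicalBasis_opens⟩⟩

theorem weight_le_max_mk {B : Set (Set X)} (hB : IsTopologicalBasis B) :
    weight X ≤ max ℵ₀ #B :=
  max_le_max le_rfl (ciInf_le' (fun B : {B : Set (Set X) // IsTopologicalBasis B} => #B.1) ⟨B, hB⟩)

theorem exists_isTopologicalBasis_max_mk_eq_weight :
    ∃ B : Set (Set X), IsTopologicalBasis B ∧ max ℵ₀ #B = weight X := by
  obtain ⟨⟨B, hB⟩, hmin⟩ := ciInf_mem fun B : {B : Set (Set X) // IsTopologicalBasis B} => #B.1
  exact ⟨B, hB, congrArg (max ℵ₀) hmin⟩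

theorem weight_le_of_isInducing {Y : Type u} [TopologicalSpace Y] {f : X → Y}
    (hf : IsInducing f) : weight X ≤ weight Y := by
  obtain ⟨B, hB, hBY⟩ := exists_isTopologicalBasis_max_mk_eq_weight (X := Y)
  calc weight X ≤ max ℵ₀ #((f ⁻¹' ·) '' B) := weight_le_max_mk (hB.isInducing hf)
    _ ≤ max ℵ₀ #B := max_le_max le_rfl mk_image_le
    _ = weight Y := hBY

end Weight

section PiBase

variable {Y : Type*} [TopologicalSpace Y] {S : Set (Set Y)}

theorem IsPiBase.dense_image (hS : IsPiBase S) {d : Set Y → Y} (hd : ∀ P ∈ S, d P ∈ P) :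
    Dense (d '' S) := by
  refine dense_iff_inter_open.2 fun W hW hWne => ?_
  obtain ⟨P, hP, hPW⟩ := hS.2 W hW hWne
  exact ⟨d P, hPW (hd P hP), mem_image_of_mem d hP⟩

theorem Dense.image_val_subset_interior_closure {X : Set Y} (hX : Dense X) {U : Set X}
    (hU : IsOpen U) : (↑) '' U ⊆ interior (closure ((↑) '' U : Set Y)) := by
  obtain ⟨V, hV, rfl⟩ := isOpen_induced_iff.mp hU
  rw [Subtype.image_preimage_coe]
  refine inter_subset_right.trans (interior_maximal ?_ hV)
  simpa only [inter_comm] using hX.open_subset_closure_inter hV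

theorem Dense.isPiBase_interior_closure_image [RegularSpace Y] {X : Set Y} (hX : Dense X)
    {B : Set (Set X)} (hB : IsTopologicalBasis B) :
    IsPiBase ((fun U => interior (closure ((↑) '' U : Set Y))) '' B \ {∅}) := by
  refine ⟨?_, ?_⟩
  · rintro _ ⟨⟨U, -, rfl⟩, hne⟩
    exact ⟨isOpen_interior, nonempty_iff_ne_empty.2 hne⟩
  rintro W hW ⟨x, hxW⟩
  obtain ⟨V, hVx, hVclosed, hVW⟩ := exists_mem_nhds_isClosed_subset (hW.mem_nhds hxW)
  obtain ⟨y, hyV, hyX⟩ := hX.inter_open_nonempty _ isOpen_interior ⟨x, mem_interior_iff_mem_nhds.2 hVx⟩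
  obtain ⟨U, hUB, hyU, hUV⟩ := hB.exists_subset_of_mem_open (a := ⟨y, hyX⟩) hyV
    (isOpen_interior.preimage continuous_subtype_val)
  have hyP : y ∈ interior (closure ((↑) '' U : Set Y)) :=
    hX.image_val_subset_interior_closure (hB.isOpen hUB) ⟨_, hyU, rfl⟩
  refine ⟨_, ⟨mem_image_of_mem _ hUB, nonempty_iff_ne_empty.1 ⟨y, hyP⟩⟩, ?_⟩
  calc interior (closure ((↑) '' U)) ⊆ closure (interior V) :=
        interior_subset.trans (closure_mono (image_subset_iff.2 hUV))
    _ ⊆ W := (closure_minimal interior_subset hVclosed).trans hVW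

end PiBase

section TopologicalGroup

variable {G : Type*} [Group G] [TopologicalSpace G] [IsTopologicalGroup G]

theorem exists_open_nhds_one_inv_mul_subset {W : Set G} (hW : W ∈ 𝓝 (1 : G)) :
    ∃ V : Set G, IsOpen V ∧ (1 : G) ∈ V ∧ V⁻¹ * V ⊆ W := by
  obtain ⟨U, hU, hU1, hUW⟩ := exists_open_nhds_one_mul_subset hW
  refine ⟨U ∩ U⁻¹, hU.inter hU.inv, ⟨hU1, by simpa using hU1⟩, ?_⟩
  refine (mul_subset_mul ?_ inter_subset_left).trans hUW
  simp

theorem IsPiBase.hasBasis_nhds_one {S : Set (Set G)} (hS : IsPiBase S) :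
    (𝓝 (1 : G)).HasBasis (· ∈ S) fun P => P⁻¹ * P := by
  refine ⟨fun W => ⟨fun hW => ?_, fun ⟨P, hP, hPW⟩ => ?_⟩⟩
  · obtain ⟨V, hV, hV1, hVW⟩ := exists_open_nhds_one_inv_mul_subset hW
    obtain ⟨P, hP, hPV⟩ := hS.2 V hV ⟨1, hV1⟩
    exact ⟨P, hP, (mul_subset_mul (inv_subset_inv.2 hPV) hPV).trans hVW⟩
  · obtain ⟨hPopen, p, hp⟩ := hS.1 P hP
    refine mem_of_superset (hPopen.mul_left.mem_nhds ?_) hPW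
    simpa using mul_mem_mul (inv_mem_inv.2 hp) hp

theorem Dense.isTopologicalBasis_image2_smul {D : Set G} (hD : Dense D) {ι : Type*}
    {p : ι → Prop} {s : ι → Set G} (hs : (𝓝 1).HasBasis p s) (hso : ∀ i, p i → IsOpen (s i)) :
    IsTopologicalBasis (image2 (fun d i => d • s i) D {i | p i}) := by
  refine isTopologicalBasis_of_isOpen_of_nhds ?_ fun x W hxW hW => ?_
  · rintro _ ⟨d, -, i, hi, rfl⟩
    exact (hso i hi).smul d
  obtain ⟨V, hV, hV1, hVW⟩ :=
    exists_open_nhds_one_inv_mul_subset ((hW.smul x⁻¹).mem_nhds ⟨x, hxW, inv_mul_cancel x⟩)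
  obtain ⟨i, hi, hiV⟩ := hs.mem_iff.1 (hV.mem_nhds hV1)
  -- a point `d = x * a` of `D` with `a⁻¹ ∈ s i` puts `x = d * a⁻¹` into `d • s i`
  obtain ⟨d, ⟨a, ha, hxa⟩, hdD⟩ := hD.inter_open_nonempty (x • (s i)⁻¹)
    ((hso i hi).inv.smul x) ⟨x, 1, by simpa using mem_of_mem_nhds (hs.mem_of_mem hi), mul_one x⟩
  refine ⟨d • s i, mem_image2_of_mem hdD hi, ⟨a⁻¹, ha, by simp [← hxa]⟩, ?_⟩
  rintro _ ⟨b, hb, rfl⟩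
  obtain ⟨w, hw, hxw⟩ := hVW (mul_mem_mul (inv_subset_inv.2 hiV ha) (hiV hb))
  simpa [← hxa, ← hxw, mul_assoc] using hw

theorem IsPiBase.weight_le {S : Set (Set G)} (hS : IsPiBase S) : weight G ≤ max ℵ₀ #S := by
  choose! d hd using fun P hP => (hS.1 P hP).2
  have hC := (hS.dense_image hd).isTopologicalBasis_image2_smul hS.hasBasis_nhds_one
    fun P hP => (hS.1 P hP).1.mul_left
  calc weight G ≤ max ℵ₀ #(image2 (fun x P => x • (P⁻¹ * P)) (d '' S) S) := weight_le_max_mk hC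
    _ ≤ max ℵ₀ (#S * #S) := max_le_max le_rfl (mk_image2_le.trans (mul_le_mul' mk_image_le le_rfl))
    _ ≤ max ℵ₀ #S := max_le (le_max_left _ _) ((mul_le_max _ _).trans (by simp [max_comm]))

end TopologicalGroup

theorem weight_eq_of_dense_in_topologicalGroup_general {G : Type u} [Group G] [TopologicalSpace G]
    [IsTopologicalGroup G] {X : Set G} (hX : Dense X) :
    weight X = weight G := by
  refine le_antisymm (weight_le_of_isInducing IsInducing.subtypeVal) ?_
  obtain ⟨B, hB, hBX⟩ := exists_isTopologicalBasis_max_mk_eq_weight (X := X)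
  calc weight G ≤ max ℵ₀ #↥((fun U => interior (closure ((↑) '' U : Set G))) '' B \ {∅}) :=
        (hX.isPiBase_interior_closure_image hB).weight_le
    _ ≤ max ℵ₀ #B := max_le_max le_rfl ((mk_le_mk_of_subset sdiff_subset).trans mk_image_le)
    _ = weight X := hBX

/-- If `X` is a dense subspace of a topological group `G`, then `w(X) = w(G)`. -/
theorem weight_eq_of_dense_in_topologicalGroup {G : Type u} [Group G] [TopologicalSpace G]
    [IsTopologicalGroup G] [T2Space G] {X : Set G} (hX : Dense X) :
    weight X = weight G :=
  weight_eq_of_dense_in_topologicalGroup_general hX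
end

section
/- If $X$ is a dense subspace of a regular topological space $G$ and $x \in X$, then the character of $x$ in $X$ equals the character of $x$ in $G$. -/
open Cardinal Filter

/-- The character of a point `x` in a topological space: the minimal cardinality of a
neighborhood basis at `x`. -/
noncomputable def character {X : Type u} [TopologicalSpace X] (x : X) : Cardinal.{u} :=
  ⨅ S : {S : Set (Set X) // (nhds x).HasBasis (· ∈ S) id}, #S.1

instance characterIndexNonempty {Y : Type u} [TopologicalSpace Y] (x : Y) :
    Nonempty {S : Set (Set Y) // (nhds x).HasBasis (· ∈ S) id} :=
  ⟨⟨{s | s ∈ nhds x}, (nhds x).basis_sets⟩⟩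

lemma character_le {Y : Type u} [TopologicalSpace Y] (x : Y) {S : Set (Set Y)}
    (h : (nhds x).HasBasis (· ∈ S) id) : character x ≤ #S :=
  ciInf_le' _ (⟨S, h⟩ : {S : Set (Set Y) // (nhds x).HasBasis (· ∈ S) id})

lemma le_character {Y : Type u} [TopologicalSpace Y] (x : Y) {c : Cardinal.{u}}
    (h : ∀ S : Set (Set Y), (nhds x).HasBasis (· ∈ S) id → c ≤ #S) : c ≤ character x :=
  le_ciInf fun S => h S.1 S.2

/-- If `X` is a dense subspace of a regular space `G` and `x ∈ X`, then the character of
`x` in `X` equals the character of `x` in `G`. -/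
theorem character_eq_of_dense {G : Type u} [TopologicalSpace G] [RegularSpace G]
    {X : Set G} (hX : Dense X) (x : G) (hx : x ∈ X) :
    character (⟨x, hx⟩ : X) = character x := by
  apply le_antisymm
  · -- character of x in X ≤ character of x in G
    refine le_character _ fun S hS => ?_
    have h1 : (nhds (⟨x, hx⟩ : X)).HasBasis
        (· ∈ (fun s => ((↑) : X → G) ⁻¹' s) '' S) id := by
      rw [hasBasis_iff]
      intro t
      rw [mem_nhds_subtype]
      constructor
      · rintro ⟨u, hu, hut⟩
        obtain ⟨s, hsS, hsu⟩ := hS.mem_iff.mp hu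
        exact ⟨_, Set.mem_image_of_mem _ hsS, (Set.preimage_mono hsu).trans hut⟩
      · rintro ⟨_, ⟨s, hsS, rfl⟩, hst⟩
        exact ⟨s, hS.mem_of_mem hsS, hst⟩
    exact (character_le _ h1).trans Cardinal.mk_image_le
  · -- character of x in G ≤ character of x in X
    refine le_character _ fun T hT => ?_
    have h2 : (nhds x).HasBasis
        (· ∈ (fun t => closure (((↑) : X → G) '' t)) '' T) id := by
      rw [hasBasis_iff]
      intro u
      constructor
      · intro hu
        obtain ⟨C, ⟨hCn, hCc⟩, hCu⟩ := (closed_nhds_basis x).mem_iff.mp hu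
        have : ((↑) : X → G) ⁻¹' C ∈ nhds (⟨x, hx⟩ : X) :=
          (mem_nhds_subtype X ⟨x, hx⟩ _).mpr ⟨C, hCn, le_refl _⟩
        obtain ⟨t, htT, htC⟩ := hT.mem_iff.mp this
        refine ⟨_, Set.mem_image_of_mem _ htT, ?_⟩
        have himg : ((↑) : X → G) '' t ⊆ C := by
          rintro _ ⟨y, hy, rfl⟩; exact htC hy
        calc closure (((↑) : X → G) '' t) ⊆ closure C := closure_mono himg
          _ = C := hCc.closure_eq
          _ ⊆ u := hCu
      · rintro ⟨_, ⟨t, htT, rfl⟩, hsu⟩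
        refine mem_of_superset ?_ hsu
        -- t is a nbhd of ⟨x,hx⟩ in X, so closure of its image is a nbhd of x
        have htn : t ∈ nhds (⟨x, hx⟩ : X) := hT.mem_of_mem htT
        obtain ⟨v, hv, hvt⟩ := (mem_nhds_subtype X ⟨x, hx⟩ t).mp htn
        obtain ⟨w, hwv, hwo, hxw⟩ := mem_nhds_iff.mp hv
        refine mem_of_superset (hwo.mem_nhds hxw) ?_
        calc w ⊆ closure (w ∩ X) := hX.open_subset_closure_inter hwo
          _ ⊆ closure (((↑) : X → G) '' t) := by
              apply closure_mono
              rintro z ⟨hzw, hzX⟩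
              exact ⟨⟨z, hzX⟩, hvt (hwv hzw), rfl⟩
    exact (character_le _ h2).trans Cardinal.mk_image_le
end

section
/- Let $f : Y \to Z$ be a continuous map between Hausdorff Lindelöf P-spaces such that $Z$ is zero-dimensional (has a base of clopen sets). Then $f$ is a closed map. -/
open TopologicalSpace

lemma aux_lindelof_closed {Z : Type u} [TopologicalSpace Z] [T2Space Z]
    (hPZ : ∀ s : ℕ → Set Z, (∀ n, IsOpen (s n)) → IsOpen (⋂ n, s n))
    {s : Set Z} (hs : IsLindelof s) : IsClosed s := by
  rcases s.eq_empty_or_nonempty with rfl | hne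
  · exact isClosed_empty
  rw [← isOpen_compl_iff, isOpen_iff_forall_mem_open]
  intro z hz
  have hne' : ∀ y : s, (y : Z) ≠ z := fun y h => hz (h ▸ y.2)
  choose U V hU hV hyU hzV hUV using fun y : s => t2_separation (hne' y)
  have hcov : s ⊆ ⋃ y : s, U y := fun y hy => Set.mem_iUnion.2 ⟨⟨y, hy⟩, hyU _⟩
  obtain ⟨r, hr, hrcov⟩ := hs.elim_countable_subcover U hU hcov
  have hrne : r.Nonempty := by
    rcases r.eq_empty_or_nonempty with rfl | h
    · simp at hrcov
      exact absurd hrcov (Set.nonempty_iff_ne_empty.1 hne)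
    · exact h
  obtain ⟨e, he⟩ := hr.exists_eq_range hrne
  refine ⟨⋂ n, V (e n), ?_, hPZ _ fun n => hV _, Set.mem_iInter.2 fun n => hzV _⟩
  intro w hw hws
  obtain ⟨y, hyr, hwy⟩ := Set.mem_iUnion₂.1 (hrcov hws)
  rw [he] at hyr
  obtain ⟨n, rfl⟩ := hyr
  exact (hUV (e n)).le_bot ⟨hwy, Set.mem_iInter.1 hw n⟩

/-- A continuous map between Hausdorff Lindelöf P-spaces whose codomain is
zero-dimensional is a closed map. -/
theorem isClosedMap_of_lindelof_pSpaces {Y Z : Type u} [TopologicalSpace Y]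
    [TopologicalSpace Z] [T2Space Y] [T2Space Z] [LindelofSpace Y] [LindelofSpace Z]
    (hPY : ∀ s : ℕ → Set Y, (∀ n, IsOpen (s n)) → IsOpen (⋂ n, s n))
    (hPZ : ∀ s : ℕ → Set Z, (∀ n, IsOpen (s n)) → IsOpen (⋂ n, s n))
    (hz : IsTopologicalBasis {s : Set Z | IsClopen s})
    (f : Y → Z) (hf : Continuous f) :
    IsClosedMap f := fun C hC =>
  aux_lindelof_closed hPZ ((hC.isLindelof).image hf)
end

section
/- A continuous bijection between Hausdorff zero-dimensional Lindelöf P-spaces is a homeomorphism. -/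
open TopologicalSpace Set

lemma psp_sInter_open {X : Type*} [TopologicalSpace X]
    (hP : ∀ s : ℕ → Set X, (∀ n, IsOpen (s n)) → IsOpen (⋂ n, s n))
    {S : Set (Set X)} (hc : S.Countable) (ho : ∀ s ∈ S, IsOpen s) :
    IsOpen (⋂₀ S) := by
  rcases S.eq_empty_or_nonempty with h | h
  · simp [h]
  · obtain ⟨g, hg⟩ := hc.exists_eq_range h
    rw [hg, sInter_range]
    exact hP g fun n => ho _ (hg ▸ mem_range_self n)

lemma psp_lindelof_isClosed {X : Type*} [TopologicalSpace X] [T2Space X]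
    (hP : ∀ s : ℕ → Set X, (∀ n, IsOpen (s n)) → IsOpen (⋂ n, s n))
    {K : Set X} (hK : IsLindelof K) : IsClosed K := by
  rw [← isOpen_compl_iff, isOpen_iff_forall_mem_open]
  intro z hz
  have sep : ∀ y ∈ K, ∃ U V : Set X, IsOpen U ∧ IsOpen V ∧ y ∈ U ∧ z ∈ V ∧ Disjoint U V := by
    intro y hy
    obtain ⟨U, V, hU, hV, hyU, hzV, hUV⟩ := t2_separation (show y ≠ z from fun h => hz (h ▸ hy))
    exact ⟨U, V, hU, hV, hyU, hzV, hUV⟩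
  choose U V hU hV hyU hzV hUV using sep
  obtain ⟨t, htc, hts⟩ := hK.elim_nhds_subcover' (fun y hy => U y hy)
    (fun y hy => (hU y hy).mem_nhds (hyU y hy))
  refine ⟨⋂ x ∈ t, V x.1 x.2, ?_, ?_, ?_⟩
  · intro w hw hwK
    obtain ⟨x, hxt, hxU⟩ := mem_iUnion₂.1 (hts hwK)
    exact (hUV x.1 x.2).ne_of_mem hxU (mem_iInter₂.1 hw x hxt) rfl
  · have heq : (⋂ x ∈ t, V x.1 x.2) = ⋂₀ ((fun x : K => V x.1 x.2) '' t) := by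
      rw [sInter_image]
    rw [heq]
    exact psp_sInter_open hP (htc.image _)
      (fun s hs => by obtain ⟨x, -, rfl⟩ := hs; exact hV x.1 x.2)
  · exact mem_iInter₂.2 fun x _ => hzV x.1 x.2

/-- A continuous bijection between Hausdorff zero-dimensional Lindelöf P-spaces is a
homeomorphism. -/
theorem isHomeomorph_of_lindelof_pSpaces {Y Z : Type u} [TopologicalSpace Y]
    [TopologicalSpace Z] [T2Space Y] [T2Space Z] [LindelofSpace Y] [LindelofSpace Z]
    (hPY : ∀ s : ℕ → Set Y, (∀ n, IsOpen (s n)) → IsOpen (⋂ n, s n))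
    (hPZ : ∀ s : ℕ → Set Z, (∀ n, IsOpen (s n)) → IsOpen (⋂ n, s n))
    (hzY : IsTopologicalBasis {s : Set Y | IsClopen s})
    (hzZ : IsTopologicalBasis {s : Set Z | IsClopen s})
    (f : Y → Z) (hf : Continuous f) (hb : Function.Bijective f) :
    IsHomeomorph f := by
  rw [isHomeomorph_iff_continuous_isClosedMap_bijective]
  refine ⟨hf, fun C hC => ?_, hb⟩
  exact psp_lindelof_isClosed hPZ ((hC.isLindelof).image hf)
end

section
/- Every regular Lindelöf P-space is zero-dimensional, i.e., has a base consisting of clopen sets. -/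
open TopologicalSpace

/-- Every regular (Hausdorff) Lindelöf P-space is zero-dimensional: the clopen sets form a
base of the topology. -/
theorem zeroDimensional_of_regular_lindelof_pSpace {X : Type u} [TopologicalSpace X]
    [T2Space X] [RegularSpace X] [LindelofSpace X]
    (hP : ∀ s : ℕ → Set X, (∀ n, IsOpen (s n)) → IsOpen (⋂ n, s n)) :
    IsTopologicalBasis {s : Set X | IsClopen s} := by
  apply isTopologicalBasis_of_isOpen_of_nhds (fun u hu => hu.2)
  intro x U hxU hU
  -- step lemma using normality
  have key : ∀ s : Set X, closure s ⊆ U → ∃ t : Set X, IsOpen t ∧ closure s ⊆ t ∧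
      closure t ⊆ U := fun s hs =>
    normal_exists_closure_subset isClosed_closure hU hs
  have h0 : ∃ t : Set X, IsOpen t ∧ x ∈ t ∧ closure t ⊆ U := by
    obtain ⟨t, ht, hxt, htU⟩ :=
      normal_exists_closure_subset isClosed_singleton hU (Set.singleton_subset_iff.2 hxU)
    exact ⟨t, ht, hxt rfl, htU⟩
  -- recursively build increasing sequence
  let Q : Set X → Prop := fun s => IsOpen s ∧ x ∈ s ∧ closure s ⊆ U
  have step : ∀ s : {s : Set X // Q s}, ∃ t : {s : Set X // Q s},
      closure s.1 ⊆ t.1 := by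
    rintro ⟨s, hso, hxs, hsU⟩
    obtain ⟨t, ht, hst, htU⟩ := key s hsU
    exact ⟨⟨t, ht, hst (subset_closure hxs), htU⟩, hst⟩
  choose f hf using step
  obtain ⟨t0, ht0, hxt0, ht0U⟩ := h0
  let V : ℕ → {s : Set X // Q s} := fun n => f^[n] ⟨t0, ht0, hxt0, ht0U⟩
  have hVs : ∀ n, closure (V n).1 ⊆ (V (n+1)).1 := by
    intro n
    have : V (n+1) = f (V n) := Function.iterate_succ_apply' f n _
    rw [this]
    exact hf (V n)
  refine ⟨⋃ n, (V n).1, ?_, ?_, ?_⟩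
  · constructor
    · -- closed: complement is ⋂ (closure (V n))ᶜ, open by P
      have : (⋃ n, (V n).1)ᶜ = ⋂ n, (closure (V n).1)ᶜ := by
        ext y
        simp only [Set.mem_compl_iff, Set.mem_iUnion, Set.mem_iInter, not_exists]
        constructor
        · intro h n hy
          exact h (n+1) (hVs n hy)
        · intro h n hy
          exact h n (subset_closure hy)
      rw [← isOpen_compl_iff, this]
      exact hP _ fun n => isClosed_closure.isOpen_compl
    · exact isOpen_iUnion fun n => (V n).2.1
  · exact Set.mem_iUnion.2 ⟨0, (V 0).2.2.1⟩
  · exact Set.iUnion_subset fun n => (subset_closure.trans (V n).2.2.2)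
end

section
/- If a Lindelöf P-space $X$ (Hausdorff, regular) is homeomorphic to a subspace of a separable Hausdorff space, then $w(X) \leq 2^{\aleph_0}$. -/
open Cardinal TopologicalSpace

section Aux
open Set Topology
universe u

section PSpace
variable {X : Type u} [TopologicalSpace X]

/-- In a P-space, a countable intersection of open sets is open. -/
lemma pS_isOpen_iInter (hP : ∀ s : ℕ → Set X, (∀ n, IsOpen (s n)) → IsOpen (⋂ n, s n))
    {ι : Type*} [Countable ι] {U : ι → Set X} (h : ∀ i, IsOpen (U i)) :
    IsOpen (⋂ i, U i) := by
  rcases isEmpty_or_nonempty ι with hι | hι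
  · simp [Set.iInter_of_empty]
  · obtain ⟨e, he⟩ := exists_surjective_nat ι
    have : ⋂ i, U i = ⋂ n, U (e n) := by
      apply Set.Subset.antisymm
      · exact Set.subset_iInter fun n => Set.iInter_subset _ _
      · intro x hx
        refine Set.mem_iInter.2 fun i => ?_
        obtain ⟨n, rfl⟩ := he i
        exact Set.mem_iInter.1 hx n
    rw [this]
    exact hP _ fun n => h _

/-- In a P-space, a countable union of closed sets is closed. -/
lemma pS_isClosed_iUnion (hP : ∀ s : ℕ → Set X, (∀ n, IsOpen (s n)) → IsOpen (⋂ n, s n))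
    {ι : Type*} [Countable ι] {F : ι → Set X} (h : ∀ i, IsClosed (F i)) :
    IsClosed (⋃ i, F i) := by
  rw [← isOpen_compl_iff, Set.compl_iUnion]
  exact pS_isOpen_iInter hP fun i => (h i).isOpen_compl


section Sep
variable {X : Type u} [TopologicalSpace X] [RegularSpace X] [LindelofSpace X]

lemma pS_swell (hP : ∀ s : ℕ → Set X, (∀ n, IsOpen (s n)) → IsOpen (⋂ n, s n))
    {K B : Set X} (hK : IsClosed K) (hB : IsClosed B) (hKB : Disjoint K B) :
    ∃ G : Set X, IsOpen G ∧ K ⊆ G ∧ Disjoint (closure G) B := by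
  -- for each x ∈ K choose open W x with x ∈ W x, closure (W x) ∩ B = ∅
  have hstep : ∀ x : K, ∃ W : Set X, IsOpen W ∧ (x : X) ∈ W ∧ Disjoint (closure W) B := by
    intro ⟨x, hx⟩
    have hxB : Bᶜ ∈ nhds x := hB.isOpen_compl.mem_nhds (Set.disjoint_left.1 hKB hx)
    obtain ⟨t, ht, htc, hts⟩ := exists_mem_nhds_isClosed_subset hxB
    refine ⟨interior t, isOpen_interior, mem_interior_iff_mem_nhds.2 ht, ?_⟩
    have : closure (interior t) ⊆ Bᶜ :=
      (closure_minimal interior_subset htc).trans hts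
    exact Set.disjoint_left.2 fun a ha => this ha
  choose W hWo hWx hWB using hstep
  have hcov : K ⊆ ⋃ x : K, W x := fun x hx => Set.mem_iUnion.2 ⟨⟨x, hx⟩, hWx _⟩
  obtain ⟨r, hrc, hrs⟩ := (hK.isLindelof).elim_countable_subcover W (fun i => hWo i) hcov
  refine ⟨⋃ x ∈ r, W x, isOpen_biUnion fun i _ => hWo i, hrs, ?_⟩
  have hre : ⋃ x ∈ r, W x = ⋃ x : r, W x := by
    ext y; simp
  have hclosed : IsClosed (⋃ x : r, closure (W x)) := by
    have : Countable r := hrc.to_subtype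
    exact pS_isClosed_iUnion hP fun i => isClosed_closure
  have hsub : closure (⋃ x ∈ r, W x) ⊆ ⋃ x : r, closure (W x) := by
    rw [hre]
    exact closure_minimal (Set.iUnion_mono fun i => subset_closure) hclosed
  refine Set.disjoint_left.2 fun a ha hb => ?_
  obtain ⟨i, hi⟩ := Set.mem_iUnion.1 (hsub ha)
  exact Set.disjoint_left.1 (hWB i) hi hb

lemma pS_clopen_sep (hP : ∀ s : ℕ → Set X, (∀ n, IsOpen (s n)) → IsOpen (⋂ n, s n))
    {A B : Set X} (hA : IsClosed A) (hB : IsClosed B) (hAB : Disjoint A B) :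
    ∃ C : Set X, IsClopen C ∧ A ⊆ C ∧ Disjoint C B := by
  -- iterate pS_swell
  classical
  let F : Set X → Set X := fun K =>
    if h : IsClosed K ∧ Disjoint K B then (pS_swell hP h.1 hB h.2).choose else ∅
  have hF : ∀ K, IsClosed K → Disjoint K B →
      IsOpen (F K) ∧ K ⊆ F K ∧ Disjoint (closure (F K)) B := by
    intro K h1 h2
    have h : IsClosed K ∧ Disjoint K B := ⟨h1, h2⟩
    simp only [F, dif_pos h]
    exact (pS_swell hP h1 hB h2).choose_spec
  let G : ℕ → Set X := fun n => Nat.rec (F A) (fun _ p => F (closure p)) n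
  have hG : ∀ n, IsOpen (G n) ∧ Disjoint (closure (G n)) B ∧ G n ⊆ G (n + 1) := by
    have key : ∀ n, IsOpen (G n) ∧ Disjoint (closure (G n)) B := by
      intro n
      induction n with
      | zero =>
        obtain ⟨h1, _, h3⟩ := hF A hA hAB
        exact ⟨h1, h3⟩
      | succ k ih =>
        obtain ⟨h1, _, h3⟩ := hF (closure (G k)) isClosed_closure ih.2
        exact ⟨h1, h3⟩
    intro n
    refine ⟨(key n).1, (key n).2, ?_⟩
    exact subset_closure.trans (hF (closure (G n)) isClosed_closure (key n).2).2.1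
  refine ⟨⋃ n, G n, ⟨?_, isOpen_iUnion fun n => (hG n).1⟩, ?_, ?_⟩
  · -- closed: ⋃ G n = ⋃ closure (G n)
    have heq : ⋃ n, G n = ⋃ n, closure (G n) := by
      apply Set.Subset.antisymm (Set.iUnion_mono fun n => subset_closure)
      refine Set.iUnion_subset fun n => ?_
      have : closure (G n) ⊆ G (n + 1) :=
        (hF (closure (G n)) isClosed_closure (hG n).2.1).2.1
      exact this.trans (Set.subset_iUnion G (n + 1))
    rw [heq]
    exact pS_isClosed_iUnion hP fun n => isClosed_closure
  · exact ((hF A hA hAB).2.1).trans (Set.subset_iUnion G 0)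
  · refine Set.disjoint_left.2 fun a ha hb => ?_
    obtain ⟨n, hn⟩ := Set.mem_iUnion.1 ha
    exact Set.disjoint_left.1 (hG n).2.1 (subset_closure hn) hb

end Sep

section RO
variable {S : Type u} [TopologicalSpace S]

def IsRO (R : Set S) : Prop := interior (closure R) = R

lemma IsRO.isOpen {R : Set S} (h : IsRO R) : IsOpen R := h ▸ isOpen_interior

lemma isRO_ro {U : Set S} (hU : IsOpen U) : IsRO (interior (closure U)) := by
  apply Set.Subset.antisymm
  · exact interior_mono (closure_minimal interior_subset isClosed_closure)
  · exact interior_mono (closure_mono (hU.subset_interior_closure))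

lemma isRO_univ : IsRO (Set.univ : Set S) := by simp [IsRO]

lemma isRO_empty : IsRO (∅ : Set S) := by simp [IsRO]

lemma subset_ro {U : Set S} (hU : IsOpen U) : U ⊆ interior (closure U) :=
  hU.subset_interior_closure

/-- disjoint open sets have disjoint regular-open hulls -/
lemma ro_disjoint {U V : Set S} (hU : IsOpen U) (hV : IsOpen V) (h : Disjoint U V) :
    Disjoint (interior (closure U)) (interior (closure V)) := by
  rw [Set.disjoint_iff_inter_eq_empty] at h ⊢
  by_contra hne
  obtain ⟨z, hz⟩ := Set.nonempty_iff_ne_empty.2 hne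
  set W := interior (closure U) ∩ interior (closure V) with hW
  have hWo : IsOpen W := isOpen_interior.inter isOpen_interior
  -- W nonempty open ⊆ closure U, so W ∩ U nonempty
  have h1 : (W ∩ U).Nonempty := by
    have hzc : z ∈ closure U := interior_subset hz.1
    exact (mem_closure_iff.1 hzc) W hWo hz
  obtain ⟨w, hwW, hwU⟩ := h1
  -- W ∩ U nonempty open ⊆ closure V, so meets V
  have h2 : ((W ∩ U) ∩ V).Nonempty := by
    have hwc : w ∈ closure V := interior_subset hwW.2
    exact (mem_closure_iff.1 hwc) _ (hWo.inter hU) ⟨hwW, hwU⟩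
  obtain ⟨v, hv⟩ := h2
  have : v ∈ U ∩ V := ⟨hv.1.2, hv.2⟩
  rw [h] at this
  exact this

/-- regular open sets are determined by their trace on a dense set -/
lemma ro_inj {D : Set S} (hD : Dense D) {R R' : Set S} (hR : IsRO R) (hR' : IsRO R')
    (h : R ∩ D = R' ∩ D) : R = R' := by
  have key : ∀ {T : Set S}, IsOpen T → closure (T ∩ D) = closure T := by
    intro T hT
    apply Set.Subset.antisymm (closure_mono Set.inter_subset_left)
    intro x hx
    rw [mem_closure_iff] at hx ⊢
    intro o ho hxo
    obtain ⟨y, hy⟩ := hx o ho hxo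
    have : (o ∩ T).Nonempty := ⟨y, hy⟩
    obtain ⟨d, hd⟩ := hD.inter_open_nonempty _ (ho.inter hT) this
    exact ⟨d, ⟨hd.1.1, hd.1.2, hd.2⟩⟩
  have : closure R = closure R' := by
    rw [← key hR.isOpen, ← key hR'.isOpen, h]
  rw [← hR, ← hR', this]

end RO

section code
variable {X : Type u} [TopologicalSpace X] [LindelofSpace X]
  {S : Type u} [TopologicalSpace S] [T2Space S]


lemma exists_code
    (hP : ∀ s : ℕ → Set X, (∀ n, IsOpen (s n)) → IsOpen (⋂ n, s n))
    (f : X → S) (hf : Topology.IsEmbedding f)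
    {C : Set X} (hC : IsClopen C) :
    ∃ g : ℕ → ℕ → Set S, (∀ m n, IsRO (g m n)) ∧ f ⁻¹' (⋃ m, ⋂ n, g m n) = Cᶜ := by
  by_cases hCe : C = ∅
  · refine ⟨fun _ _ => Set.univ, fun _ _ => by simp [IsRO], ?_⟩
    simp [hCe, Set.iUnion_const, Set.iInter_const]
  by_cases hCc : Cᶜ = ∅
  · refine ⟨fun _ _ => (∅ : Set S), fun _ _ => by simp [IsRO], ?_⟩
    simp [hCc, Set.iInter_const]
  have hCne : C.Nonempty := Set.nonempty_iff_ne_empty.2 hCe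
  have hCcne : Cᶜ.Nonempty := Set.nonempty_iff_ne_empty.2 hCc
  -- separation by regular open sets
  have hsep : ∀ (y : ↥(Cᶜ)) (x : ↥C), ∃ P Q : Set S,
      IsRO P ∧ IsRO Q ∧ f x ∈ P ∧ f y ∈ Q ∧ Disjoint P Q := by
    intro y x
    have hxy : f (x : X) ≠ f (y : X) := by
      intro h
      have := hf.injective h
      exact y.2 (this ▸ x.2)
    obtain ⟨U, V, hU, hV, hxU, hyV, hUV⟩ := t2_separation hxy
    exact ⟨interior (closure U), interior (closure V), isRO_ro hU, isRO_ro hV,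
      subset_ro hU hxU, subset_ro hV hyV, ro_disjoint hU hV hUV⟩
  choose P Q hP1 hQ1 hxP hyQ hdisj using hsep
  -- countable subcover of C for each y
  have hcov : ∀ y : ↥(Cᶜ), ∃ e : ℕ → ↥C, C ⊆ ⋃ n, f ⁻¹' (P y (e n)) := by
    intro y
    have hsub : C ⊆ ⋃ x : ↥C, f ⁻¹' (P y x) :=
      fun x hx => Set.mem_iUnion.2 ⟨⟨x, hx⟩, hxP y ⟨x, hx⟩⟩
    obtain ⟨r, hrc, hrs⟩ := hC.isClosed.isLindelof.elim_countable_subcover _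
      (fun x => ((hP1 y x).isOpen).preimage hf.continuous) hsub
    have hrne : r.Nonempty := by
      rcases Set.eq_empty_or_nonempty r with h | h
      · subst h
        simp only [Set.mem_empty_iff_false, Set.iUnion_of_empty, Set.iUnion_empty] at hrs
        exact absurd (hrs hCne.choose_spec) (Set.notMem_empty _)
      · exact h
    haveI := hrc.to_subtype
    haveI : Nonempty ↥r := hrne.to_subtype
    obtain ⟨e0, he0⟩ := exists_surjective_nat ↥r
    refine ⟨fun n => ((e0 n : ↥r) : ↥C), fun x hx => ?_⟩
    obtain ⟨i, hi, hxi⟩ := Set.mem_iUnion₂.1 (hrs hx)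
    obtain ⟨n, hn⟩ := he0 ⟨i, hi⟩
    refine Set.mem_iUnion.2 ⟨n, ?_⟩
    show x ∈ f ⁻¹' P y ((e0 n : ↥r) : ↥C)
    rw [hn]
    exact hxi
  choose E hE using hcov
  -- the Gδ sets separating points of Cᶜ from C
  set V : ↥(Cᶜ) → Set S := fun y => ⋂ n, Q y (E y n) with hV
  have hVy : ∀ y : ↥(Cᶜ), f (y : X) ∈ V y := fun y => Set.mem_iInter.2 fun n => hyQ y _
  have hVC : ∀ (y : ↥(Cᶜ)) (x : X), x ∈ C → f x ∉ V y := by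
    intro y x hx hmem
    obtain ⟨n, hn⟩ := Set.mem_iUnion.1 (hE y hx)
    exact Set.disjoint_left.1 (hdisj y (E y n)) hn (Set.mem_iInter.1 hmem n)
  have hVopen : ∀ y : ↥(Cᶜ), IsOpen (f ⁻¹' V y) := by
    intro y
    rw [hV]
    simp only [Set.preimage_iInter]
    exact hP _ fun n => ((hQ1 y (E y n)).isOpen).preimage hf.continuous
  -- countable subcover of Cᶜ
  have hsub2 : Cᶜ ⊆ ⋃ y : ↥(Cᶜ), f ⁻¹' V y :=
    fun y hy => Set.mem_iUnion.2 ⟨⟨y, hy⟩, hVy ⟨y, hy⟩⟩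
  obtain ⟨r, hrc, hrs⟩ := (hC.isOpen.isClosed_compl).isLindelof.elim_countable_subcover _
    hVopen hsub2
  have hrne : r.Nonempty := by
    rcases Set.eq_empty_or_nonempty r with h | h
    · subst h
      simp only [Set.mem_empty_iff_false, Set.iUnion_of_empty, Set.iUnion_empty] at hrs
      exact absurd (hrs hCcne.choose_spec) (Set.notMem_empty _)
    · exact h
  haveI := hrc.to_subtype
  haveI : Nonempty ↥r := hrne.to_subtype
  obtain ⟨e1, he1⟩ := exists_surjective_nat ↥r
  set τ : ℕ → ↥(Cᶜ) := fun m => ((e1 m : ↥r) : ↥(Cᶜ)) with hτ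
  refine ⟨fun m n => Q (τ m) (E (τ m) n), fun m n => hQ1 _ _, ?_⟩
  ext x
  simp only [Set.mem_preimage, Set.mem_iUnion, Set.mem_compl_iff]
  constructor
  · rintro ⟨m, hm⟩ hxC
    exact hVC (τ m) x hxC hm
  · intro hx
    obtain ⟨i, hi, hxi⟩ := Set.mem_iUnion₂.1 (hrs hx)
    obtain ⟨m, hm⟩ := he1 ⟨i, hi⟩
    refine ⟨m, ?_⟩
    show f x ∈ ⋂ n, Q ((e1 m : ↥r) : ↥(Cᶜ)) (E ((e1 m : ↥r) : ↥(Cᶜ)) n)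
    rw [hm]
    exact hxi

end code

/-- If a regular Hausdorff Lindelöf P-space `X` embeds into a separable Hausdorff space,
then `w(X) ≤ 𝔠`. -/
theorem weight_le_continuum_of_lindelof_pSpace {X : Type u} [TopologicalSpace X]
    [T2Space X] [RegularSpace X] [LindelofSpace X]
    (hP : ∀ s : ℕ → Set X, (∀ n, IsOpen (s n)) → IsOpen (⋂ n, s n))
    {S : Type u} [TopologicalSpace S] [T2Space S] [SeparableSpace S]
    (f : X → S) (hf : Topology.IsEmbedding f) :
    weight X ≤ Cardinal.continuum := by
  obtain ⟨D, hDc, hDd⟩ := exists_countable_dense S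
  have hBasis : IsTopologicalBasis {C : Set X | IsClopen C} := by
    refine isTopologicalBasis_of_isOpen_of_nhds (fun u hu => hu.isOpen) ?_
    intro a u hau hu
    obtain ⟨C, hC, hsub, hdisj⟩ := pS_clopen_sep hP (isClosed_singleton (x := a))
      hu.isClosed_compl (Set.disjoint_left.2 fun b hb hbc => hbc (hb ▸ hau))
    exact ⟨C, hC, hsub rfl, fun x hx =>
      by_contra fun hxu => Set.disjoint_left.1 hdisj hx hxu⟩
  have hcard : #↥{C : Set X | IsClopen C} ≤ Cardinal.continuum := by
    have code := fun C : ↥{C : Set X | IsClopen C} => exists_code hP f hf C.2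
    set g : ↥{C : Set X | IsClopen C} → ℕ → ℕ → Set S := fun C => (code C).choose with hg
    have hg1 : ∀ C m n, IsRO (g C m n) := fun C => (code C).choose_spec.1
    have hg2 : ∀ C, f ⁻¹' (⋃ m, ⋂ n, g C m n) = (C : Set X)ᶜ :=
      fun C => (code C).choose_spec.2
    set enc : ↥{C : Set X | IsClopen C} → Set (ℕ × ℕ × ↥D) :=
      fun C => {p | (p.2.2 : S) ∈ g C p.1 p.2.1} with henc
    have hinj : Function.Injective enc := by
      intro C C' h
      have hgeq : ∀ m n, g C m n = g C' m n := by
        intro m n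
        refine ro_inj hDd (hg1 C m n) (hg1 C' m n) ?_
        ext s
        simp only [Set.mem_inter_iff]
        constructor
        · rintro ⟨hs, hsD⟩
          have hmem : (m, n, (⟨s, hsD⟩ : ↥D)) ∈ enc C := hs
          rw [h] at hmem
          exact ⟨hmem, hsD⟩
        · rintro ⟨hs, hsD⟩
          have hmem : (m, n, (⟨s, hsD⟩ : ↥D)) ∈ enc C' := hs
          rw [← h] at hmem
          exact ⟨hmem, hsD⟩
      have hcc : (C : Set X)ᶜ = (C' : Set X)ᶜ := by
        rw [← hg2 C, ← hg2 C']
        exact congrArg (f ⁻¹' ·)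
          (Set.iUnion_congr fun m => Set.iInter_congr fun n => hgeq m n)
      exact Subtype.ext (compl_injective hcc)
    calc #↥{C : Set X | IsClopen C} ≤ #(Set (ℕ × ℕ × ↥D)) :=
          Cardinal.mk_le_of_injective hinj
      _ = 2 ^ #(ℕ × ℕ × ↥D) := Cardinal.mk_set
      _ ≤ 2 ^ ℵ₀ := by
          refine Cardinal.power_le_power_left two_ne_zero ?_
          haveI : Countable ↥D := hDc.to_subtype
          exact Cardinal.mk_le_aleph0
      _ = Cardinal.continuum := Cardinal.two_power_aleph0
  show max ℵ₀ (⨅ B : {B : Set (Set X) // IsTopologicalBasis B}, #B.1) ≤ Cardinal.continuum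
  refine max_le Cardinal.aleph0_le_continuum ?_
  exact le_trans (ciInf_le' _ ⟨{C : Set X | IsClopen C}, hBasis⟩) hcard

end PSpace
end Aux
end

section
/- In a separable topological space $Y$, the family $\mathcal{B} = \{\mathrm{int}_Y(\overline{U}) : U \text{ open in } Y\}$ has cardinality at most $2^{\aleph_0}$, and $\mathcal{B}$ is a base for a coarser topology on $Y$ that is Hausdorff whenever $Y$ is Hausdorff. -/
open Cardinal TopologicalSpace Set

/-! The sets `int (closure U)` with `U` open are exactly the regular open sets `s = int (closure s)`.
These are closed under finite intersections, so they form a base of the topology they generate,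
and disjoint open sets have disjoint regularizations, which transfers the Hausdorff property.
A regular open set `s` is recovered from its trace on a dense set `D` as `int (closure (s ∩ D))`,
so for countable dense `D` there are at most `2 ^ ℵ₀` of them. -/

variable {X : Type*} [TopologicalSpace X]

def IsRegularOpen (s : Set X) : Prop :=
  interior (closure s) = s

theorem IsRegularOpen.isOpen {s : Set X} (hs : IsRegularOpen s) : IsOpen s :=
  hs ▸ isOpen_interior

theorem isRegularOpen_interior_closure (s : Set X) : IsRegularOpen (interior (closure s)) :=
  interior_closure_idem

theorem isRegularOpen_univ : IsRegularOpen (univ : Set X) := by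
  simp [IsRegularOpen]

theorem IsRegularOpen.inter {s t : Set X} (hs : IsRegularOpen s) (ht : IsRegularOpen t) :
    IsRegularOpen (s ∩ t) := by
  refine (subset_inter ?_ ?_).antisymm (hs.isOpen.inter ht.isOpen).subset_interior_closure
  · exact hs.subset.trans' (interior_mono (closure_mono inter_subset_left))
  · exact ht.subset.trans' (interior_mono (closure_mono inter_subset_right))

theorem setOf_isRegularOpen_eq_image :
    {s : Set X | IsRegularOpen s} = (fun U => interior (closure U)) '' {U : Set X | IsOpen U} := by
  refine Subset.antisymm (fun s hs => ⟨s, hs.isOpen, hs⟩) ?_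
  rintro _ ⟨U, -, rfl⟩
  exact isRegularOpen_interior_closure U

theorem IsRegularOpen.interior_closure_inter_dense {s D : Set X} (hs : IsRegularOpen s)
    (hD : Dense D) : interior (closure (s ∩ D)) = s := by
  have : closure (s ∩ D) = closure s :=
    (closure_mono inter_subset_left).antisymm
      (closure_minimal (hD.open_subset_closure_inter hs.isOpen) isClosed_closure)
  rw [this, hs]

theorem mk_setOf_isRegularOpen_le_continuum [SeparableSpace X] :
    #{s : Set X | IsRegularOpen s} ≤ 𝔠 := by
  obtain ⟨D, hD_countable, hD_dense⟩ := exists_countable_dense X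
  have trace_injective :
      Function.Injective fun s : {s : Set X | IsRegularOpen s} => ((↑) : D → X) ⁻¹' s := by
    rintro ⟨s, hs⟩ ⟨t, ht⟩ hst
    rw [Subtype.mk.injEq, ← hs.interior_closure_inter_dense hD_dense,
      ← ht.interior_closure_inter_dense hD_dense, inter_comm s, inter_comm t,
      ← Subtype.preimage_coe_eq_preimage_coe_iff.mp hst]
  calc #{s : Set X | IsRegularOpen s} ≤ #(Set D) := mk_le_of_injective trace_injective
    _ = 2 ^ #D := mk_set
    _ ≤ 2 ^ ℵ₀ := power_le_power_left two_ne_zero hD_countable.le_aleph0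
    _ = 𝔠 := two_power_aleph0

theorem Disjoint.interior_closure {s t : Set X} (hst : Disjoint s t) (ht : IsOpen t) :
    Disjoint (interior (closure s)) (interior (closure t)) :=
  (((hst.closure_left ht).mono_left interior_subset).closure_right isOpen_interior).mono_right
    interior_subset

theorem isTopologicalBasis_setOf_isRegularOpen :
    @IsTopologicalBasis X (generateFrom {s : Set X | IsRegularOpen s})
      {s : Set X | IsRegularOpen s} := by
  have := @isTopologicalBasis_of_subbasis_of_inter X (generateFrom _) {s : Set X | IsRegularOpen s}
    rfl fun _ hs _ ht => IsRegularOpen.inter hs ht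
  rwa [insert_eq_of_mem (s := {s : Set X | IsRegularOpen s}) isRegularOpen_univ] at this

theorem t2Space_generateFrom_isRegularOpen [T2Space X] :
    @T2Space X (generateFrom {s : Set X | IsRegularOpen s}) := by
  refine @T2Space.mk X (generateFrom _) fun x y hxy => ?_
  obtain ⟨U, V, hU, hV, hxU, hyV, hUV⟩ := t2_separation hxy
  exact ⟨_, _, isOpen_generateFrom_of_mem (isRegularOpen_interior_closure U),
    isOpen_generateFrom_of_mem (isRegularOpen_interior_closure V),
    hU.subset_interior_closure hxU, hV.subset_interior_closure hyV, hUV.interior_closure hV⟩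

/-- In a separable Hausdorff space `Y`, the family
`B = {int (closure U) : U open}` has cardinality at most `𝔠`, and it is a base for a
coarser topology on `Y` which is again Hausdorff. -/
theorem regularOpen_family_base {Y : Type u} [ty : TopologicalSpace Y] [T2Space Y]
    [SeparableSpace Y] :
    #↥((fun U => interior (closure U)) '' {U : Set Y | IsOpen U}) ≤ Cardinal.continuum ∧
    ty ≤ TopologicalSpace.generateFrom
        ((fun U => interior (closure U)) '' {U : Set Y | IsOpen U}) ∧
    @IsTopologicalBasis Y
        (TopologicalSpace.generateFrom ((fun U => interior (closure U)) '' {U : Set Y | IsOpen U}))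
        ((fun U => interior (closure U)) '' {U : Set Y | IsOpen U}) ∧
    @T2Space Y
        (TopologicalSpace.generateFrom
          ((fun U => interior (closure U)) '' {U : Set Y | IsOpen U})) := by
  rw [← setOf_isRegularOpen_eq_image]
  exact ⟨mk_setOf_isRegularOpen_le_continuum,
    le_generateFrom fun _ hs => IsRegularOpen.isOpen hs,
    isTopologicalBasis_setOf_isRegularOpen, t2Space_generateFrom_isRegularOpen⟩
end

section
/- If $i : Y \to X$ is a continuous bijection of topological spaces and $X$ is homeomorphic to a subspace of a separable Hausdorff space, then $Y$ is also homeomorphic to a subspace of a separable Hausdorff space. -/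
open TopologicalSpace

/-- If `i : Y → X` is a continuous bijection and `X` embeds into a separable Hausdorff
space, then so does `Y`. -/
theorem embeds_in_separable_of_continuous_bijection {Y X : Type u}
    [tY : TopologicalSpace Y] [tX : TopologicalSpace X] [T2Space Y] [T2Space X]
    (i : Y → X) (hc : Continuous i) (hb : Function.Bijective i)
    {S : Type u} [tS : TopologicalSpace S] [T2Space S] [SeparableSpace S]
    (e : X → S) (he : Topology.IsEmbedding e) :
    ∃ (T : Type u) (tT : TopologicalSpace T), @T2Space T tT ∧ @SeparableSpace T tT ∧
      ∃ f : Y → T, @Topology.IsEmbedding Y T tY tT f := by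
  classical
  by_cases hY : Nonempty Y
  · -- main case
    have hS : Nonempty S := ⟨e (i hY.some)⟩
    obtain ⟨d, hd⟩ := TopologicalSpace.exists_dense_seq S
    set f : Y → S := e ∘ i with hfdef
    have hfc : Continuous f := he.continuous.comp hc
    have hfinj : Function.Injective f := he.injective.comp hb.injective
    -- the filter attached to each point of Y
    set p : Y → Filter (ℕ × ℕ) :=
      fun y => (Filter.comap d (nhds (f y))) ×ˢ Filter.atTop with hpdef
    have hpne : ∀ y, (p y).NeBot := by
      intro y
      have h1 : (Filter.comap d (nhds (f y))).NeBot := by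
        rw [Filter.comap_neBot_iff]
        intro t ht
        obtain ⟨s, hs1, k, rfl⟩ := mem_closure_iff_nhds.mp (hd (f y)) t ht
        exact ⟨k, hs1⟩
      exact Filter.prod_neBot.mpr ⟨h1, Filter.atTop_neBot⟩
    have hpV : ∀ (y : Y) (V : Set S), IsOpen V → f y ∈ V → ∀ m : ℕ,
        {c : ℕ × ℕ | d c.1 ∈ V ∧ m ≤ c.2} ∈ p y := by
      intro y V hV hyV m
      have h1 : d ⁻¹' V ∈ Filter.comap d (nhds (f y)) :=
        Filter.preimage_mem_comap (hV.mem_nhds hyV)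
      have h2 : Set.Ici m ∈ (Filter.atTop : Filter ℕ) := Filter.mem_atTop m
      have := Filter.prod_mem_prod h1 h2
      exact Filter.mem_of_superset this (by intro c hc'; exact ⟨hc'.1, hc'.2⟩)
    -- the ambient space
    let T := Y ⊕ ULift.{u} (ℕ × ℕ)
    let g : ℕ × ℕ → T := fun c => Sum.inr (ULift.up c)
    letI tT : TopologicalSpace T :=
      { IsOpen := fun O => IsOpen (Sum.inl ⁻¹' O) ∧ ∀ y, Sum.inl y ∈ O → g ⁻¹' O ∈ p y
        isOpen_univ := ⟨isOpen_univ, fun y _ => Filter.univ_mem⟩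
        isOpen_inter := fun O₁ O₂ h₁ h₂ =>
          ⟨h₁.1.inter h₂.1, fun y hy => Filter.inter_mem (h₁.2 y hy.1) (h₂.2 y hy.2)⟩
        isOpen_sUnion := fun C hC => by
          constructor
          · rw [Set.preimage_sUnion]
            exact isOpen_biUnion fun O hO => (hC O hO).1
          · rintro y ⟨O, hO, hyO⟩
            exact Filter.mem_of_superset ((hC O hO).2 y hyO)
              (Set.preimage_mono (Set.subset_sUnion_of_mem hO)) }
    -- basic open sets
    have hOV : ∀ (V : Set S), IsOpen V → ∀ m : ℕ,
        tT.IsOpen {t : T | match t with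
          | Sum.inl y => f y ∈ V
          | Sum.inr c => d c.down.1 ∈ V ∧ m ≤ c.down.2} := by
      intro V hV m
      constructor
      · have : (Sum.inl ⁻¹' {t : T | match t with
            | Sum.inl y => f y ∈ V
            | Sum.inr c => d c.down.1 ∈ V ∧ m ≤ c.down.2}) = f ⁻¹' V := rfl
        rw [this]; exact hfc.isOpen_preimage V hV
      · intro y hy
        exact hpV y V hV hy m
    have hOU : ∀ (U : Set Y), IsOpen U →
        tT.IsOpen {t : T | match t with
          | Sum.inl y => y ∈ U
          | Sum.inr _ => True} := by
      intro U hU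
      constructor
      · have : (Sum.inl ⁻¹' {t : T | match t with
            | Sum.inl y => y ∈ U
            | Sum.inr _ => True}) = U := rfl
        rw [this]; exact hU
      · intro y _
        exact Filter.univ_mem
    have hsingle : ∀ c : ULift.{u} (ℕ × ℕ), tT.IsOpen {Sum.inr c} := by
      intro c
      constructor
      · have : (Sum.inl ⁻¹' ({Sum.inr c} : Set T)) = ∅ := by
          ext y; simp
        rw [this]; exact isOpen_empty
      · intro y hy; simp at hy
    -- T2
    have hT2 : @T2Space T tT := by
      refine @T2Space.mk T tT ?_
      intro a b hab
      match a, b with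
      | Sum.inl y, Sum.inl y' =>
        have hne : f y ≠ f y' := fun h => hab (by rw [hfinj h])
        obtain ⟨V, V', hV, hV', hyV, hyV', hVV'⟩ := t2_separation hne
        refine ⟨_, _, hOV V hV 0, hOV V' hV' 0, hyV, hyV', ?_⟩
        rw [Set.disjoint_left]
        rintro (z | c) hz hz'
        · exact Set.disjoint_left.mp hVV' hz hz'
        · exact Set.disjoint_left.mp hVV' hz.1 hz'.1
      | Sum.inl y, Sum.inr c =>
        refine ⟨_, _, hOV Set.univ isOpen_univ (c.down.2 + 1), hsingle c,
          (Set.mem_univ (f y)), rfl, ?_⟩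
        rw [Set.disjoint_left]
        rintro (z | c') hz hz'
        · simp at hz'
        · obtain rfl : c' = c := Sum.inr_injective hz'
          exact absurd hz.2 (by omega)
      | Sum.inr c, Sum.inl y =>
        refine ⟨_, _, hsingle c, hOV Set.univ isOpen_univ (c.down.2 + 1),
          rfl, (Set.mem_univ (f y)), ?_⟩
        rw [Set.disjoint_left]
        rintro (z | c') hz hz'
        · simp at hz
        · obtain rfl : c' = c := Sum.inr_injective hz
          exact absurd hz'.2 (by omega)
      | Sum.inr c, Sum.inr c' =>
        refine ⟨_, _, hsingle c, hsingle c', rfl, rfl, ?_⟩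
        rw [Set.disjoint_left]
        rintro z hz hz'
        simp only [Set.mem_singleton_iff] at hz hz'
        exact hab (hz.symm.trans hz')
    -- separable
    have hsep : @SeparableSpace T tT := by
      refine @SeparableSpace.mk T tT ⟨Set.range g, Set.countable_range g, ?_⟩
      rw [dense_iff_inter_open]
      rintro O hO ⟨t, ht⟩
      match t with
      | Sum.inl y =>
        have hmem : g ⁻¹' O ∈ p y := hO.2 y ht
        have : (g ⁻¹' O).Nonempty := (hpne y).nonempty_of_mem hmem
        obtain ⟨c, hcO⟩ := this
        exact ⟨g c, hcO, Set.mem_range_self c⟩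
      | Sum.inr c =>
        exact ⟨Sum.inr c, ht, ⟨c.down, rfl⟩⟩
    -- embedding
    have hemb : @Topology.IsEmbedding Y T tY tT Sum.inl := by
      refine ⟨⟨?_⟩, Sum.inl_injective⟩
      refine TopologicalSpace.ext_iff.mpr fun U => ?_
      rw [@isOpen_induced_iff Y T tT U Sum.inl]
      constructor
      · intro hU
        refine ⟨{t : T | match t with
          | Sum.inl y => y ∈ U
          | Sum.inr _ => True}, hOU U hU, rfl⟩
      · rintro ⟨O, hO, rfl⟩
        exact hO.1
    exact ⟨T, tT, hT2, hsep, Sum.inl, hemb⟩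
  · -- Y is empty
    haveI hYe : IsEmpty Y := not_nonempty_iff.mp hY
    refine ⟨PUnit.{u + 1}, ⊥, ?_, ?_, fun _ => PUnit.unit, ?_, ?_⟩
    · haveI : @DiscreteTopology PUnit.{u+1} ⊥ := ⟨rfl⟩
      exact DiscreteTopology.toT2Space
    · exact @SeparableSpace.mk _ ⊥ ⟨Set.univ, Set.countable_univ, @dense_univ _ ⊥⟩
    · constructor
      refine TopologicalSpace.ext_iff.mpr fun U => ?_
      have : U = ∅ := Set.eq_empty_of_isEmpty U
      subst this
      simp [isOpen_empty]
    · exact fun a => hYe.elim a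
end

section
/- Let $X$ be a topological space covered by a family $\mathcal{C}$ of subsets with $|\mathcal{C}| \leq 2^{\aleph_0}$ such that each $C \in \mathcal{C}$ is compact Hausdorff with character at most $\kappa$ at each of its points (where $\kappa \geq \aleph_0$). Then $|X| \leq 2^{\kappa}$. -/
open Cardinal Filter Set Topology

universe u

/-!
A space covered by at most `𝔠 ≤ 2 ^ κ` pieces of size at most `2 ^ κ` has size at most `2 ^ κ`,
so the point is Arhangel'skii's bound `#C ≤ 2 ^ κ` for a compact Hausdorff `C` of character
`≤ κ`, proved by closing off. Character `≤ κ` gives tightness `≤ κ`, and it bounds the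
closure of a set of size `≤ κ` by `2 ^ κ`, since a point of the closure is determined by the
traces of its basic neighbourhoods. In `κ⁺` stages one builds `F` with `#F ≤ 2 ^ κ` that
contains the closure of each of its subsets of size `≤ κ`, and that meets the complement of
every union of basic neighbourhoods of at most `κ` points of `F` which does not cover `C`. By
tightness `F` is closed, hence compact. A point `q ∉ F` would then give finitely many basic
neighbourhoods of points of `F` that avoid `q` and cover `F`, which is impossible.
-/

namespace Cardinal

variable {Y : Type u} {κ μ : Cardinal.{u}}

def closingOff (κ : Cardinal.{u}) (G : Set Y → Set Y) (o : Ordinal.{u}) : Set Y :=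
  ⋃ T : {T : Set Y // T ⊆ ⋃ o' < o, closingOff κ G o' ∧ #T ≤ κ}, G T.1
termination_by o
decreasing_by assumption

theorem mk_closingOff_le (hμ₀ : ℵ₀ ≤ μ) (hμ : μ ^ κ ≤ μ) {G : Set Y → Set Y}
    (hG : ∀ T : Set Y, #T ≤ κ → #(G T) ≤ μ) (o : Ordinal.{u}) (ho : o.card ≤ μ) :
    #(closingOff κ G o) ≤ μ := by
  induction o using WellFoundedLT.induction with
  | ind o ih =>
  rw [closingOff]
  refine (mk_iUnion_le _).trans (mul_le_of_le hμ₀ ?_ (ciSup_le' fun T => hG T.1 T.2.2))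
  have hprev : #(⋃ o' < o, closingOff κ G o') ≤ μ :=
    mk_biUnion_le_of_le ho hμ₀ _ fun o' ho' => ih o' ho' ((Ordinal.card_le_card ho'.le).trans ho)
  calc _ ≤ max #(⋃ o' < o, closingOff κ G o') ℵ₀ ^ κ := mk_bounded_subset_le _ κ
    _ ≤ μ ^ κ := power_le_power_right (max_le hprev hμ₀)
    _ ≤ μ := hμ

theorem exists_mk_le_forall_subset_image_subset (hκ : ℵ₀ ≤ κ) (hκμ : κ < μ) (hμ : μ ^ κ ≤ μ)
    (G : Set Y → Set Y) (hG : ∀ T : Set Y, #T ≤ κ → #(G T) ≤ μ) :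
    ∃ F : Set Y, #F ≤ μ ∧ ∀ T ⊆ F, #T ≤ κ → G T ⊆ F := by
  have hcard : ∀ o < (Order.succ κ).ord, o.card ≤ κ := fun o ho =>
    Order.lt_succ_iff.1 (lt_ord.1 ho)
  refine ⟨⋃ o < (Order.succ κ).ord, closingOff κ G o, ?_, fun T hT hTκ => ?_⟩
  · refine mk_biUnion_le_of_le ?_ (hκ.trans hκμ.le) _ fun o ho =>
      mk_closingOff_le (hκ.trans hκμ.le) hμ hG o ((hcard o ho).trans hκμ.le)
    rw [card_ord]
    exact Order.succ_le_of_lt hκμ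
  have hstage : ∀ t : T, ∃ o < (Order.succ κ).ord, (t : Y) ∈ closingOff κ G o := fun t => by
    simpa using hT t.2
  choose g hg hgt using hstage
  -- `succ κ` is regular, so `κ` many stages below `(succ κ).ord` are bounded below it.
  have hlt : ⨆ t, g t + 1 < (Order.succ κ).ord := by
    refine Ordinal.iSup_add_one_lt_of_lt_cof ?_ hg
    rw [(isRegular_succ hκ).cof_ord]
    exact hTκ.trans_lt (Order.lt_succ κ)
  have hTsub : T ⊆ ⋃ o' < ⨆ t, g t + 1, closingOff κ G o' := fun t ht =>
    mem_biUnion (Ordinal.lt_iSup_add_one g ⟨t, ht⟩) (hgt ⟨t, ht⟩)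
  refine (subset_biUnion_of_mem (u := closingOff κ G) hlt).trans' ?_
  rw [closingOff]
  exact subset_iUnion_of_subset ⟨T, hTsub, hTκ⟩ subset_rfl

section Topology

variable [TopologicalSpace Y]

theorem exists_subset_mk_le_mem_closure_of_hasBasis {x : Y} {A : Set Y} {B : Set (Set Y)}
    (hB : (𝓝 x).HasBasis (· ∈ B) id) (hx : x ∈ closure A) :
    ∃ T ⊆ A, #T ≤ #B ∧ x ∈ closure T := by
  have hmeet : ∀ U : B, ((U : Set Y) ∩ A).Nonempty := fun U =>
    (mem_closure_iff_nhds_basis' hB).1 hx U U.2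
  choose f hf using hmeet
  refine ⟨range f, range_subset_iff.2 fun U => (hf U).2, mk_range_le, ?_⟩
  exact (mem_closure_iff_nhds_basis' hB).2 fun U hU => ⟨f ⟨U, hU⟩, (hf ⟨U, hU⟩).1, mem_range_self _⟩

theorem mk_closure_le_two_power [T2Space Y] (hκ : ℵ₀ ≤ κ) {b : Y → Set (Set Y)}
    (hbκ : ∀ x, #(b x) ≤ κ) (hb : ∀ x, (𝓝 x).HasBasis (· ∈ b x) id) {T : Set Y}
    (hT : #T ≤ κ) : #(closure T) ≤ 2 ^ κ := by
  let trace (x : closure T) : {S : Set (Set T) // #S ≤ κ} :=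
    ⟨(fun U => (↑) ⁻¹' U) '' b x, mk_image_le.trans (hbκ x)⟩
  have htrace (x : closure T) :
      (comap ((↑) : T → Y) (𝓝 (x : Y))).HasBasis (· ∈ (trace x).1) id :=
    ((hb x).comap _).to_image_id
  have hinj : Function.Injective trace := by
    intro x y hxy
    have htr : comap ((↑) : T → Y) (𝓝 (x : Y)) = comap (↑) (𝓝 (y : Y)) :=
      (htrace x).eq_of_same_basis (by rw [hxy]; exact htrace y)
    have := mem_closure_iff_comap_neBot.1 x.2
    exact Subtype.ext (tendsto_nhds_unique tendsto_comap (by rw [htr]; exact tendsto_comap))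
  calc #(closure T) ≤ #{S : Set (Set T) // #S ≤ κ} := mk_le_of_injective hinj
    _ ≤ max #(Set T) ℵ₀ ^ κ := mk_bounded_set_le _ κ
    _ ≤ (2 ^ κ) ^ κ := by
      refine power_le_power_right (max_le ?_ (hκ.trans (cantor κ).le))
      rw [mk_set]
      exact power_le_power_left two_ne_zero hT
    _ = 2 ^ κ := by rw [← power_mul, mul_eq_self hκ]

theorem _root_.IsClosed.eq_univ_of_diff_sUnion_nonempty [CompactSpace Y] [T1Space Y]
    {b : Y → Set (Set Y)} (hb : ∀ x, (𝓝 x).HasBasis (· ∈ b x) id) {F : Set Y} (hF : IsClosed F)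
    (hmeet : ∀ T ⊆ F, T.Finite → ∀ V ⊆ ⋃ x ∈ T, b x, (⋃₀ V)ᶜ.Nonempty → (F \ ⋃₀ V).Nonempty) :
    F = Set.univ := by
  refine eq_univ_of_forall fun q => by_contra fun hq => ?_
  have hsep : ∀ x ∈ F, ∃ U ∈ b x, q ∉ U := fun x hx => by
    obtain ⟨U, hU, hUq⟩ :=
      (hb x).mem_iff.1 (isOpen_compl_singleton.mem_nhds (ne_of_mem_of_not_mem hx hq))
    exact ⟨U, hU, fun h => hUq h rfl⟩
  choose! U hUb hUq using hsep
  obtain ⟨t, htF, hFt⟩ := hF.isCompact.elim_nhds_subcover U fun x hx => (hb x).mem_of_mem (hUb x hx)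
  have hV : U '' t ⊆ ⋃ x ∈ (t : Set Y), b x :=
    image_subset_iff.2 fun x hx => mem_biUnion hx (hUb x (htF x hx))
  have hqV : q ∉ ⋃₀ (U '' t) := by
    rintro ⟨_, ⟨x, hx, rfl⟩, hqU⟩
    exact hUq x (htF x hx) hqU
  obtain ⟨p, hpF, hpV⟩ := hmeet t htF t.finite_toSet _ hV ⟨q, hqV⟩
  exact hpV (by rw [sUnion_image]; exact hFt hpF)

theorem mk_le_two_power_of_compactSpace [CompactSpace Y] [T2Space Y] (hκ : ℵ₀ ≤ κ)
    (hχ : ∀ x : Y, ∃ B : Set (Set Y), #B ≤ κ ∧ (𝓝 x).HasBasis (· ∈ B) id) : #Y ≤ 2 ^ κ := by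
  choose b hbκ hb using hχ
  let witnesses (T : Set Y) : Set Y :=
    range fun V : {V : Set (Set Y) // V ⊆ ⋃ x ∈ T, b x ∧ (⋃₀ V)ᶜ.Nonempty} => V.2.2.some
  have hwit (T : Set Y) (hT : #T ≤ κ) : #(witnesses T) ≤ 2 ^ κ := by
    have hbT : #(⋃ x ∈ T, b x) ≤ κ :=
      (mk_biUnion_le _ _).trans (mul_le_of_le hκ hT (ciSup_le' fun x => hbκ x))
    calc #(witnesses T) ≤ #(𝒫 (⋃ x ∈ T, b x)) :=
          mk_range_le.trans (mk_subtype_mono fun V hV => hV.1)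
      _ ≤ 2 ^ κ := by
        rw [mk_powerset]
        exact power_le_power_left two_ne_zero hbT
  obtain ⟨F, hFcard, hF⟩ := exists_mk_le_forall_subset_image_subset hκ (cantor κ)
    (by rw [← power_mul, mul_eq_self hκ]) (fun T => closure T ∪ witnesses T) fun T hT =>
      (mk_union_le _ _).trans (add_le_of_le (hκ.trans (cantor κ).le)
        (mk_closure_le_two_power hκ hbκ hb hT) (hwit T hT))
  have hFclosed : IsClosed F := isClosed_of_closure_subset fun x hx => by
    obtain ⟨T, hTF, hTκ, hxT⟩ := exists_subset_mk_le_mem_closure_of_hasBasis (hb x) hx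
    exact hF T hTF (hTκ.trans (hbκ x)) (subset_union_left hxT)
  have hFuniv : F = Set.univ :=
    hFclosed.eq_univ_of_diff_sUnion_nonempty hb fun T hTF hTfin V hV hVc =>
      ⟨hVc.some, hF T hTF (hTfin.lt_aleph0.le.trans hκ) (subset_union_right ⟨⟨V, hV, hVc⟩, rfl⟩),
        hVc.some_mem⟩
  rw [← mk_univ, ← hFuniv]
  exact hFcard

end Topology

end Cardinal

/-- If a space `X` is covered by at most `𝔠` many compact Hausdorff subspaces, each of
character at most `κ` at each of its points (`κ` infinite), then `|X| ≤ 2 ^ κ`. -/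
theorem card_le_of_cover_by_compact {X : Type u} [TopologicalSpace X]
    (κ : Cardinal.{u}) (hκ : ℵ₀ ≤ κ)
    (𝒞 : Set (Set X)) (hcard : #𝒞 ≤ Cardinal.continuum) (hcover : ⋃₀ 𝒞 = Set.univ)
    (hcompact : ∀ C ∈ 𝒞, IsCompact C)
    (ht2 : ∀ C ∈ 𝒞, T2Space ↥C)
    (hchar : ∀ C ∈ 𝒞, ∀ x : ↥C, ∃ B : Set (Set ↥C), #B ≤ κ ∧ (nhds x).HasBasis (· ∈ B) id) :
    #X ≤ 2 ^ κ := by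
  have hC : ∀ C ∈ 𝒞, #C ≤ 2 ^ κ := fun C hC => by
    have := isCompact_iff_compactSpace.1 (hcompact C hC)
    have := ht2 C hC
    exact mk_le_two_power_of_compactSpace hκ (hchar C hC)
  have h𝒞 : #𝒞 ≤ 2 ^ κ := hcard.trans (power_le_power_left two_ne_zero hκ)
  calc #X = #(⋃₀ 𝒞) := by rw [hcover, mk_univ]
    _ ≤ #𝒞 * ⨆ C : 𝒞, #C := mk_sUnion_le 𝒞
    _ ≤ 2 ^ κ := mul_le_of_le (hκ.trans (cantor κ).le) h𝒞 (ciSup_le' fun C => hC C C.2)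
end
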